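/- arXiv:1004.3825 — 7 statements merged into one kernel-verified Lean document; each statement's English description precedes it below -/
import Mathlib

section
/- Let (G, B) be a finite-dimensional metric n-Lie algebra over ℂ and I an ideal of G. Then the orthogonal complement of [I, G, ..., G] with respect to B equals the centralizer C_G(I) = {x ∈ G : [x, I, G, ..., G] = 0}. -/
open scoped BigOperators

section NLiePreamble

variable {n : ℕ} {G : Type*} [AddCommGroup G] [Module ℂ G]

/-- The inner derivation `ad_y z = [y₁, …, y_{n+1}, z]` determined by an
`(n+2)`-ary alternating bracket. -/
def nAd (br : AlternatingMap ℂ G G (Fin (n + 2))) (y : Fin (n + 1) → G) (z : G) : G :=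
  br (Fin.snoc y z)

/-- The generalized Jacobi identity: the bracket makes `G` an `(n+2)`-Lie algebra. -/
def IsNLie (br : AlternatingMap ℂ G G (Fin (n + 2))) : Prop :=
  ∀ (x : Fin (n + 2) → G) (y : Fin (n + 1) → G),
    nAd br y (br x) = ∑ i, br (Function.update x i (nAd br y (x i)))

/-- A submodule `I` is an ideal: `[I, G, …, G] ⊆ I`. -/
def IsIdeal (br : AlternatingMap ℂ G G (Fin (n + 2))) (I : Submodule ℂ G) : Prop :=
  ∀ (y : Fin (n + 1) → G), ∀ x ∈ I, br (Fin.snoc y x) ∈ I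

/-- Invariance of a bilinear form under the bracket. -/
def IsInvariantForm (br : AlternatingMap ℂ G G (Fin (n + 2)))
    (K : LinearMap.BilinForm ℂ G) : Prop :=
  ∀ (x : Fin (n + 1) → G) (y₁ y₂ : G),
    K (br (Fin.snoc x y₁)) y₂ = - K (br (Fin.snoc x y₂)) y₁

/-- A metric on an `n`-Lie algebra: a nondegenerate invariant symmetric bilinear form. -/
def IsMetric (br : AlternatingMap ℂ G G (Fin (n + 2)))
    (B : LinearMap.BilinForm ℂ G) : Prop :=
  B.Nondegenerate ∧ (∀ x y : G, B x y = B y x) ∧ IsInvariantForm br B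

/-- The span `[W₁, …, W_{n+2}]` of all brackets with entries in the given subspaces. -/
def bracketSpan (br : AlternatingMap ℂ G G (Fin (n + 2)))
    (W : Fin (n + 2) → Submodule ℂ G) : Submodule ℂ G :=
  Submodule.span ℂ {z | ∃ w : Fin (n + 2) → G, (∀ i, w i ∈ W i) ∧ z = br w}

/-- The derived algebra `[G, …, G]`. -/
def derivedAlg (br : AlternatingMap ℂ G G (Fin (n + 2))) : Submodule ℂ G :=
  bracketSpan br fun _ => ⊤

/-- `[I, …, I]` for a subspace `I`. -/
def derivedStep (br : AlternatingMap ℂ G G (Fin (n + 2))) (I : Submodule ℂ G) :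
    Submodule ℂ G :=
  bracketSpan br fun _ => I

/-- `[J, H, G, …, G]` for subspaces `J, H`. -/
def pairBracket (br : AlternatingMap ℂ G G (Fin (n + 2))) (J H : Submodule ℂ G) :
    Submodule ℂ G :=
  bracketSpan br (Fin.cons J (Fin.cons H fun _ => (⊤ : Submodule ℂ G)))

/-- `[I, G, …, G]` for a subspace `I`. -/
def idealBracket (br : AlternatingMap ℂ G G (Fin (n + 2))) (I : Submodule ℂ G) :
    Submodule ℂ G :=
  bracketSpan br (Fin.cons I fun _ => (⊤ : Submodule ℂ G))

/-- The centralizer `C_G(I) = {x : [x, I, G, …, G] = 0}` of a subspace `I`. -/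
def centralizer (br : AlternatingMap ℂ G G (Fin (n + 2))) (I : Submodule ℂ G) :
    Submodule ℂ G where
  carrier := {x | ∀ v ∈ I, ∀ y : Fin n → G, br (Fin.cons x (Fin.cons v y)) = 0}
  add_mem' := by
    intro a b ha hb v hv y
    have := br.toMultilinearMap.cons_add (Fin.cons v y) a b
    simp only [AlternatingMap.coe_multilinearMap] at this
    rw [this, ha v hv y, hb v hv y, add_zero]
  zero_mem' := by
    intro v hv y
    have := br.toMultilinearMap.cons_smul (Fin.cons v y) (0 : ℂ) 0
    simpa using (br.toMultilinearMap.map_coord_zero (m := Fin.cons 0 (Fin.cons v y)) 0 rfl)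
  smul_mem' := by
    intro c a ha v hv y
    have := br.toMultilinearMap.cons_smul (Fin.cons v y) c a
    simp only [AlternatingMap.coe_multilinearMap] at this
    rw [this, ha v hv y, smul_zero]

/-- The center `C(G)`. -/
def center (br : AlternatingMap ℂ G G (Fin (n + 2))) : Submodule ℂ G :=
  centralizer br ⊤

/-- Nondegeneracy of `B` restricted to a subspace `W`. -/
def NondegOn (B : LinearMap.BilinForm ℂ G) (W : Submodule ℂ G) : Prop :=
  ∀ x ∈ W, (∀ y ∈ W, B x y = 0) → x = 0

/-- `(G, B)` is `B`-irreducible: no nontrivial nondegenerate ideals. -/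
def BIrreducible (br : AlternatingMap ℂ G G (Fin (n + 2)))
    (B : LinearMap.BilinForm ℂ G) : Prop :=
  ∀ I : Submodule ℂ G, IsIdeal br I → NondegOn B I → I = ⊥ ∨ I = ⊤

/-- `W` is a subalgebra. -/
def IsSubalgebra (br : AlternatingMap ℂ G G (Fin (n + 2))) (W : Submodule ℂ G) : Prop :=
  ∀ x : Fin (n + 2) → G, (∀ i, x i ∈ W) → br x ∈ W

/-- `I` is an ideal of the subalgebra `W`. -/
def IsIdealOf (br : AlternatingMap ℂ G G (Fin (n + 2))) (W I : Submodule ℂ G) : Prop :=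
  I ≤ W ∧ ∀ (y : Fin (n + 1) → G), (∀ i, y i ∈ W) → ∀ x ∈ I, br (Fin.snoc y x) ∈ I

/-- The subalgebra `W` is a simple `n`-Lie algebra. -/
def IsSimpleAlg (br : AlternatingMap ℂ G G (Fin (n + 2))) (W : Submodule ℂ G) : Prop :=
  derivedStep br W ≠ ⊥ ∧ ∀ I : Submodule ℂ G, IsIdealOf br W I → I = ⊥ ∨ I = W

/-- The subalgebra `W` is strong semisimple: a direct sum of simple ideals. -/
def IsStrongSemisimple (br : AlternatingMap ℂ G G (Fin (n + 2)))
    (W : Submodule ℂ G) : Prop :=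
  ∃ (m : ℕ) (S : Fin m → Submodule ℂ G),
    (∀ i, IsIdealOf br W (S i) ∧ IsSimpleAlg br (S i)) ∧
    iSupIndep S ∧ (⨆ i, S i) = W

/-- `I` is solvable (via the derived series). -/
def NLieSolvable (br : AlternatingMap ℂ G G (Fin (n + 2))) (I : Submodule ℂ G) : Prop :=
  ∃ k : ℕ, (derivedStep br)^[k] I = ⊥

/-- `R` is the radical: the maximal solvable ideal. -/
def NLieRadical (br : AlternatingMap ℂ G G (Fin (n + 2))) (R : Submodule ℂ G) : Prop :=
  IsIdeal br R ∧ NLieSolvable br R ∧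
    ∀ I : Submodule ℂ G, IsIdeal br I → NLieSolvable br I → I ≤ R

/-- A Levi decomposition `G = S ⊕ R`. -/
def IsLeviDecomp (br : AlternatingMap ℂ G G (Fin (n + 2)))
    (S R : Submodule ℂ G) : Prop :=
  NLieRadical br R ∧ IsSubalgebra br S ∧ IsStrongSemisimple br S ∧ IsCompl S R

/-- A minimal ideal of `G`. -/
def IsMinimalIdeal (br : AlternatingMap ℂ G G (Fin (n + 2))) (J : Submodule ℂ G) : Prop :=
  IsIdeal br J ∧ J ≠ ⊥ ∧
    ∀ I : Submodule ℂ G, IsIdeal br I → I ≤ J → I = ⊥ ∨ I = J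

/-- The socle: the sum of all minimal ideals. -/
def socle (br : AlternatingMap ℂ G G (Fin (n + 2))) : Submodule ℂ G :=
  sSup {J | IsMinimalIdeal br J}

/-- `H` is an `S`-submodule: `[S, …, S, H] ⊆ H`. -/
def IsSModule (br : AlternatingMap ℂ G G (Fin (n + 2))) (S H : Submodule ℂ G) : Prop :=
  ∀ (y : Fin (n + 1) → G), (∀ i, y i ∈ S) → ∀ x ∈ H, br (Fin.snoc y x) ∈ H

/-- `H` is an irreducible `S`-submodule. -/
def IsIrreducibleSModule (br : AlternatingMap ℂ G G (Fin (n + 2)))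
    (S H : Submodule ℂ G) : Prop :=
  IsSModule br S H ∧ H ≠ ⊥ ∧
    ∀ K : Submodule ℂ G, K ≤ H → IsSModule br S K → K = ⊥ ∨ K = H

/-- The space of invariant symmetric bilinear forms on `G`. -/
def invSymForms (br : AlternatingMap ℂ G G (Fin (n + 2))) :
    Submodule ℂ (LinearMap.BilinForm ℂ G) where
  carrier := {K | (∀ x y : G, K x y = K y x) ∧ IsInvariantForm br K}
  add_mem' := by
    rintro K L ⟨hK1, hK2⟩ ⟨hL1, hL2⟩
    refine ⟨fun x y => by simp [hK1 x y, hL1 x y], fun x y₁ y₂ => ?_⟩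
    simp only [LinearMap.add_apply]
    rw [hK2 x y₁ y₂, hL2 x y₁ y₂]; ring
  zero_mem' := ⟨fun x y => by simp, fun x y₁ y₂ => by simp⟩
  smul_mem' := by
    rintro c K ⟨hK1, hK2⟩
    refine ⟨fun x y => by simp [hK1 x y], fun x y₁ y₂ => ?_⟩
    simp only [LinearMap.smul_apply, smul_eq_mul]
    rw [hK2 x y₁ y₂]; ring

/-- The span of all nondegenerate invariant symmetric bilinear forms (the metric space `B(G)`). -/
def metricSpan (br : AlternatingMap ℂ G G (Fin (n + 2))) :
    Submodule ℂ (LinearMap.BilinForm ℂ G) :=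
  Submodule.span ℂ {K : LinearMap.BilinForm ℂ G | IsMetric br K}

/-- `Γ_B(G)`: `B`-self-adjoint elements of the centroid. -/
def centroidB (br : AlternatingMap ℂ G G (Fin (n + 2)))
    (B : LinearMap.BilinForm ℂ G) : Submodule ℂ (G →ₗ[ℂ] G) where
  carrier := {φ | (∀ (x : Fin (n + 1) → G) (z : G),
      φ (br (Fin.snoc x z)) = br (Fin.snoc x (φ z))) ∧
    ∀ x y : G, B (φ x) y = B x (φ y)}
  add_mem' := by
    rintro φ ψ ⟨hφ1, hφ2⟩ ⟨hψ1, hψ2⟩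
    constructor
    · intro x z
      have hadd := br.toMultilinearMap.snoc_add x (φ z) (ψ z)
      simp only [AlternatingMap.coe_multilinearMap] at hadd
      simp [hφ1 x z, hψ1 x z, hadd]
    · intro x y; simp [hφ2 x y, hψ2 x y]
  zero_mem' := by
    constructor
    · intro x z
      have h0 := br.toMultilinearMap.map_coord_zero (m := Fin.snoc x (0 : G)) (Fin.last _)
        (by simp)
      simp only [AlternatingMap.coe_multilinearMap] at h0
      simp [h0]
    · intro x y; simp
  smul_mem' := by
    rintro c φ ⟨hφ1, hφ2⟩
    constructor
    · intro x z
      have hs := br.toMultilinearMap.snoc_smul x c (φ z)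
      simp only [AlternatingMap.coe_multilinearMap] at hs
      simp [hφ1 x z, hs]
    · intro x y; simp [hφ2 x y]

end NLiePreamble


variable {n : ℕ} {G : Type*} [AddCommGroup G] [Module ℂ G]

/-!
Invariance moves the bracket across `B`: `B([a, u], x) = -B([a, x], u)`. Hence `x` is orthogonal
to every generator `[a, u]` of `[I, G, …, G]` (with `a₁ ∈ I`) exactly when `[a, x]` is orthogonal
to all of `G`, i.e., by nondegeneracy, when `[a, x] = 0`; up to a cyclic permutation of the
entries, this is the statement `x ∈ C_G(I)`.
-/

theorem AlternatingMap.map_snoc_eq_zero_iff {R M N : Type*} [Semiring R] [AddCommMonoid M]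
    [Module R M] [AddCommGroup N] [Module R N] {m : ℕ} (f : AlternatingMap R M N (Fin (m + 1)))
    (a : Fin m → M) (x : M) : f (Fin.snoc a x) = 0 ↔ f (Fin.cons x a) = 0 := by
  have hrot : f (Fin.snoc a x) = Equiv.Perm.sign (finRotate (m + 1)) • f (Fin.cons x a) := by
    rw [Fin.snoc_eq_cons_rotate]
    exact f.map_perm (Fin.cons x a) (finRotate (m + 1))
  rw [hrot, smul_eq_zero_iff_eq]

section Orthogonal

variable (br : AlternatingMap ℂ G G (Fin (n + 2))) (I : Submodule ℂ G)

theorem mem_centralizer_iff_snoc {x : G} :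
    x ∈ centralizer br I ↔ ∀ a : Fin (n + 1) → G, a 0 ∈ I → br (Fin.snoc a x) = 0 := by
  simp only [br.map_snoc_eq_zero_iff, Fin.forall_fin_succ_pi, Fin.cons_zero]
  exact ⟨fun h v y hv => h v hv y, fun h v hv y => h v y hv⟩

theorem snoc_mem_idealBracket {a : Fin (n + 1) → G} (ha : a 0 ∈ I) (u : G) :
    br (Fin.snoc a u) ∈ idealBracket br I := by
  refine Submodule.subset_span ⟨Fin.snoc a u, Fin.cases ?_ fun _ => trivial, rfl⟩
  show (Fin.snoc a u : Fin (n + 2) → G) (Fin.castSucc 0) ∈ I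
  rwa [Fin.snoc_castSucc]

theorem mem_orthogonal_idealBracket_iff (B : LinearMap.BilinForm ℂ G) {x : G} :
    x ∈ B.orthogonal (idealBracket br I) ↔
      ∀ a : Fin (n + 1) → G, a 0 ∈ I → ∀ u, B (br (Fin.snoc a u)) x = 0 := by
  refine ⟨fun hx a ha u => hx _ (snoc_mem_idealBracket br I ha u), fun h z hz => ?_⟩
  refine (Submodule.span_le (p := LinearMap.ker (B.flip x))).2 ?_ hz
  rintro _ ⟨w, hw, rfl⟩
  show B (br w) x = 0
  rw [← Fin.snoc_init_self w]
  exact h _ (hw 0) _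

theorem bracket_snoc_eq_zero_iff {B : LinearMap.BilinForm ℂ G} (hinv : IsInvariantForm br B)
    (hsep : B.SeparatingLeft) (a : Fin (n + 1) → G) (x : G) :
    br (Fin.snoc a x) = 0 ↔ ∀ u, B (br (Fin.snoc a u)) x = 0 := by
  refine ⟨fun h u => by rw [hinv, h, map_zero, LinearMap.zero_apply, neg_zero],
    fun h => hsep _ fun u => ?_⟩
  rw [hinv, h, neg_zero]

end Orthogonal

theorem orthogonal_idealBracket_eq_centralizer_general
    (br : AlternatingMap ℂ G G (Fin (n + 2)))
    (B : LinearMap.BilinForm ℂ G) (hB : IsMetric br B)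
    (I : Submodule ℂ G) :
    B.orthogonal (idealBracket br I) = centralizer br I := by
  obtain ⟨⟨hsep, -⟩, -, hinv⟩ := hB
  ext x
  simp only [mem_orthogonal_idealBracket_iff, mem_centralizer_iff_snoc,
    bracket_snoc_eq_zero_iff br hinv hsep]

theorem orthogonal_idealBracket_eq_centralizer
    (br : AlternatingMap ℂ G G (Fin (n + 2))) (hLie : IsNLie br)
    [FiniteDimensional ℂ G]
    (B : LinearMap.BilinForm ℂ G) (hB : IsMetric br B)
    (I : Submodule ℂ G) (hI : IsIdeal br I) :
    B.orthogonal (idealBracket br I) = centralizer br I :=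
  orthogonal_idealBracket_eq_centralizer_general br B hB I
end

section
/- Let (G, B) be a metric n-Lie algebra and suppose G = I ⊕ Y is a direct sum of ideals with I = [I,...,I] ≠ 0 (I perfect) and Y ≠ 0. Then the restriction of B to I × I is nondegenerate. -/
open scoped BigOperators

/-!
Perfectness writes every element of `I` as a combination of brackets `[w, x]` with all entries
in `I`. Invariance moves the last entry across: `B([w, x], y) = -B([w, y], x)`, and for `y ∈ Y`
the bracket `[w, y]` lies in `I ∩ Y = 0`. Hence `I ⊥ Y`, so an element of `I` orthogonal to `I`
is orthogonal to `I + Y = G` and vanishes by nondegeneracy of `B`.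
-/

variable {n : ℕ} {G : Type*} [AddCommGroup G] [Module ℂ G]

theorem IsIdeal.bracket_mem {br : AlternatingMap ℂ G G (Fin (n + 2))} {J : Submodule ℂ G}
    (hJ : IsIdeal br J) {v : Fin (n + 2) → G} {j : Fin (n + 2)} (hv : v j ∈ J) : br v ∈ J := by
  have mem_of_last : ∀ w : Fin (n + 2) → G, w (Fin.last _) ∈ J → br w ∈ J := fun w hw => by
    simpa only [Fin.snoc_init_self] using hJ (Fin.init w) _ hw
  by_cases hj : j = Fin.last _
  · exact mem_of_last v (hj ▸ hv)
  · have hswap := mem_of_last (v ∘ Equiv.swap j (Fin.last _)) (by simpa using hv)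
    rwa [br.map_swap v hj, neg_mem_iff] at hswap

theorem IsIdeal.bracket_eq_zero_of_disjoint {br : AlternatingMap ℂ G G (Fin (n + 2))}
    {I Y : Submodule ℂ G} (hI : IsIdeal br I) (hY : IsIdeal br Y) (hIY : Disjoint I Y)
    {v : Fin (n + 2) → G} {i j : Fin (n + 2)} (hi : v i ∈ I) (hj : v j ∈ Y) : br v = 0 :=
  Submodule.disjoint_def.mp hIY _ (hI.bracket_mem hi) (hY.bracket_mem hj)

theorem IsInvariantForm.apply_eq_zero_of_mem_derivedStep
    {br : AlternatingMap ℂ G G (Fin (n + 2))} {K : LinearMap.BilinForm ℂ G}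
    (hK : IsInvariantForm br K) {I Y : Submodule ℂ G} (hI : IsIdeal br I) (hY : IsIdeal br Y)
    (hIY : Disjoint I Y) {x y : G} (hx : x ∈ derivedStep br I) (hy : y ∈ Y) : K x y = 0 := by
  induction hx using Submodule.span_induction with
  | mem z hz =>
    obtain ⟨w, hw, rfl⟩ := hz
    have hbr : br (Fin.snoc (Fin.init w) y) = 0 :=
      hI.bracket_eq_zero_of_disjoint hY hIY (i := Fin.castSucc 0) (j := Fin.last _)
        (by simpa only [Fin.snoc_castSucc, Fin.init] using hw (Fin.castSucc 0))
        (by simpa only [Fin.snoc_last] using hy)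
    rw [← Fin.snoc_init_self w, hK, hbr, map_zero, LinearMap.zero_apply, neg_zero]
  | zero => simp
  | add u v _ _ hu hv => simp [hu, hv]
  | smul c u _ hu => simp [hu]

theorem nondegOn_of_codisjoint {B : LinearMap.BilinForm ℂ G} (hB : B.SeparatingLeft)
    {I Y : Submodule ℂ G} (hIY : Codisjoint I Y) (horth : ∀ x ∈ I, ∀ y ∈ Y, B x y = 0) :
    NondegOn B I := by
  intro x hx hxI
  refine hB x fun z => ?_
  obtain ⟨a, ha, b, hb, rfl⟩ :=
    Submodule.mem_sup.mp (hIY.eq_top ▸ Submodule.mem_top : z ∈ I ⊔ Y)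
  rw [map_add, hxI a ha, horth x hx b hb, add_zero]

theorem perfect_summand_nondegenerate_general
    (br : AlternatingMap ℂ G G (Fin (n + 2)))
    (B : LinearMap.BilinForm ℂ G) (hB : IsMetric br B)
    (I Y : Submodule ℂ G) (hI : IsIdeal br I) (hY : IsIdeal br Y)
    (hcompl : IsCompl I Y) (hperf : derivedStep br I = I) :
    NondegOn B I :=
  nondegOn_of_codisjoint hB.1.1 hcompl.codisjoint fun _ hx _ hy =>
    hB.2.2.apply_eq_zero_of_mem_derivedStep hI hY hcompl.disjoint (by rwa [hperf]) hy

theorem perfect_summand_nondegenerate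
    (br : AlternatingMap ℂ G G (Fin (n + 2))) (hLie : IsNLie br)
    (B : LinearMap.BilinForm ℂ G) (hB : IsMetric br B)
    (I Y : Submodule ℂ G) (hI : IsIdeal br I) (hY : IsIdeal br Y)
    (hcompl : IsCompl I Y) (hperf : derivedStep br I = I)
    (hI0 : I ≠ ⊥) (hY0 : Y ≠ ⊥) :
    NondegOn B I :=
  perfect_summand_nondegenerate_general br B hB I Y hI hY hcompl hperf
end

section
/- Let (G, B) be a finite-dimensional metric n-Lie algebra. Then the dimension of the space F(G) spanned by all invariant symmetric bilinear forms on G equals the dimension of Γ_B(G), the space of B-self-adjoint elements of the centroid of G. -/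
open scoped BigOperators

variable {n : ℕ} {G : Type*} [AddCommGroup G] [Module ℂ G]

/-! A nondegenerate `B` identifies endomorphisms `φ` of `G` with bilinear forms `B(φ·, ·)`.
Under this identification the `B`-self-adjoint maps are exactly those giving symmetric forms,
and for these the centroid condition is exactly invariance of the form, so `Γ_B(G) ≅ F(G)`. -/

section

variable {br : AlternatingMap ℂ G G (Fin (n + 2))} {B : LinearMap.BilinForm ℂ G}

theorem IsMetric.nondegenerate (hB : IsMetric br B) : B.Nondegenerate :=
  hB.1

theorem selfAdjoint_iff_comp_symm (hBsym : ∀ x y : G, B x y = B y x) (φ : G →ₗ[ℂ] G) :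
    (∀ x y : G, B (φ x) y = B x (φ y)) ↔ ∀ x y : G, (B ∘ₗ φ) x y = (B ∘ₗ φ) y x := by
  simp only [LinearMap.comp_apply, hBsym _ (φ _)]

/-- For a `B`-self-adjoint `φ`, the invariance defect of `B ∘ φ` at `([x, z], y)` is
`B(φ[x, z] - [x, φz], y)`, so nondegeneracy turns invariance into the centroid condition. -/
theorem isInvariantForm_comp_iff (hBnd : B.Nondegenerate) (hBinv : IsInvariantForm br B)
    {φ : G →ₗ[ℂ] G} (hφ : ∀ x y : G, B (φ x) y = B x (φ y)) :
    IsInvariantForm br (B ∘ₗ φ) ↔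
      ∀ (x : Fin (n + 1) → G) (z : G), φ (br (Fin.snoc x z)) = br (Fin.snoc x (φ z)) := by
  have hBinj : Function.Injective B := LinearMap.ker_eq_bot.mp hBnd.ker_eq_bot
  refine forall_congr' fun x => forall_congr' fun z => ?_
  have hdefect : ∀ y, -(B ∘ₗ φ) (br (Fin.snoc x y)) z = B (br (Fin.snoc x (φ z))) y := by
    intro y
    rw [LinearMap.comp_apply, hφ, hBinv, neg_neg]
  simp_rw [hdefect, LinearMap.comp_apply]
  exact ⟨fun h => hBinj (LinearMap.ext h), fun h y => by rw [h]⟩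

theorem mem_centroidB_iff_comp_mem_invSymForms (hB : IsMetric br B) (φ : G →ₗ[ℂ] G) :
    φ ∈ centroidB br B ↔ B ∘ₗ φ ∈ invSymForms br := by
  obtain ⟨hBnd, hBsym, hBinv⟩ := hB
  change (_ ∧ _) ↔ (_ ∧ _)
  rw [← selfAdjoint_iff_comp_symm hBsym, and_comm]
  exact and_congr_right fun hφ => (isInvariantForm_comp_iff hBnd hBinv hφ).symm

variable [FiniteDimensional ℂ G]

noncomputable def centroidBEquivInvSymForms (hB : IsMetric br B) :
    centroidB br B ≃ₗ[ℂ] invSymForms br :=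
  (LinearEquiv.congrRight (B.toDual hB.nondegenerate)).ofSubmodules _ _ <| by
    ext K
    rw [Submodule.map_equiv_eq_comap_symm, Submodule.mem_comap,
      mem_centroidB_iff_comp_mem_invSymForms hB]
    convert Iff.rfl using 2
    ext x y
    exact (LinearMap.BilinForm.apply_toDual_symm_apply (hB := hB.nondegenerate) _ _).symm

end

theorem finrank_invSymForms_eq_finrank_centroidB_general
    (br : AlternatingMap ℂ G G (Fin (n + 2)))
    [FiniteDimensional ℂ G]
    (B : LinearMap.BilinForm ℂ G) (hB : IsMetric br B) :
    Module.finrank ℂ (invSymForms br) = Module.finrank ℂ (centroidB br B) :=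
  (centroidBEquivInvSymForms hB).finrank_eq.symm

theorem finrank_invSymForms_eq_finrank_centroidB
    (br : AlternatingMap ℂ G G (Fin (n + 2))) (hLie : IsNLie br)
    [FiniteDimensional ℂ G]
    (B : LinearMap.BilinForm ℂ G) (hB : IsMetric br B) :
    Module.finrank ℂ (invSymForms br) = Module.finrank ℂ (centroidB br B) :=
  finrank_invSymForms_eq_finrank_centroidB_general br B hB
end

section
/- Let (G, B) be a metric n-Lie algebra without strong semisimple ideals and with Levi decomposition G = S ⊕ R. A subalgebra H of G is a minimal ideal of G if and only if H is an irreducible S-submodule of the centralizer C_G(R). -/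
open scoped BigOperators

/-!
As `G = S ⊕ R`, an `S`-submodule centralizing `R` is an ideal, and every ideal is an
`S`-submodule; so everything reduces to showing that the radical centralizes each minimal ideal
`H`, i.e. that the ideal `[H, R, G, …, G] ⊆ H` is `0` rather than `H`. If it were `H`, invariance
of `B` would give `[G, R, G, …, G] ⊄ H⊥`, and this space lies both in `R` and in `[G, …, G]`.
Since `J ↦ J⊥` reverses inclusions of ideals, `H⊥` is a maximal ideal, hence `R + H⊥ = G` and
`[G, …, G] + H⊥ = G`; then `R⁽ᵏ⁾ + H⊥ = G` for every `k`, and solvability of `R` forces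
`H⊥ = G`, i.e. `H = 0`.
-/

namespace AlternatingMap

variable {R M N : Type*} [CommRing R] [AddCommGroup M] [Module R M] [AddCommGroup N] [Module R N]

theorem exists_sign_update_eq_snoc {k : ℕ} (f : M [⋀^Fin (k + 1)]→ₗ[R] N)
    (m : Fin (k + 1) → M) (i : Fin (k + 1)) :
    ∃ (ε : ℤˣ) (y : Fin k → M), ∀ a, f (Function.update m i a) = ε • f (Fin.snoc y a) := by
  classical
  set σ := Equiv.swap i (Fin.last k)
  refine ⟨Equiv.Perm.sign σ, Fin.init (m ∘ σ), fun a => ?_⟩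
  have hσ : Function.update m i a ∘ σ = Fin.snoc (Fin.init (m ∘ σ)) a := by
    rw [Function.update_comp_equiv, Equiv.symm_swap, Equiv.swap_apply_left,
      ← Fin.update_snoc_last (x := (m ∘ σ) (Fin.last k)), Fin.snoc_init_self]
  rw [← hσ, f.map_perm, smul_smul, Int.units_mul_self, one_smul]

end AlternatingMap

theorem Fin.exists_perm_apply_zero_apply_one {k : ℕ} {i j : Fin (k + 2)} (h : i ≠ j) :
    ∃ σ : Equiv.Perm (Fin (k + 2)), σ 0 = i ∧ σ 1 = j := by
  set τ := Equiv.swap 0 i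
  have hτj : τ j ≠ 0 := fun hj => h (by simpa [τ] using (congrArg τ hj).symm)
  refine ⟨Equiv.swap 1 (τ j) |>.trans τ, ?_, ?_⟩
  · simp [τ, Equiv.swap_apply_of_ne_of_ne Fin.zero_ne_one hτj.symm]
  · simp [τ]

theorem LinearMap.BilinForm.orthogonal_ne_top {K V : Type*} [Field K] [AddCommGroup V]
    [Module K V] [FiniteDimensional K V] {B : LinearMap.BilinForm K V} (hB : B.Nondegenerate)
    (hB' : B.IsRefl) {W : Submodule K V} (hW : W ≠ ⊥) : B.orthogonal W ≠ ⊤ := fun h => hW <| by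
  rw [← orthogonal_orthogonal hB hB' W, h, orthogonal_top_eq_bot hB]

section

variable {n : ℕ} {G : Type*} [AddCommGroup G] [Module ℂ G]
  {br : AlternatingMap ℂ G G (Fin (n + 2))}

theorem IsIdeal.apply_mem {I : Submodule ℂ G} (hI : IsIdeal br I) (m : Fin (n + 2) → G)
    {i : Fin (n + 2)} (hm : m i ∈ I) : br m ∈ I := by
  obtain ⟨ε, y, hy⟩ := br.exists_sign_update_eq_snoc m i
  rw [← Function.update_eq_self i m, hy, Units.smul_def]
  exact zsmul_mem (hI y _ hm) _

theorem IsInvariantForm.apply_update {B : LinearMap.BilinForm ℂ G} (hB : IsInvariantForm br B)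
    (m : Fin (n + 2) → G) (i : Fin (n + 2)) (a x : G) :
    B (br (Function.update m i a)) x = - B (br (Function.update m i x)) a := by
  obtain ⟨ε, y, hy⟩ := br.exists_sign_update_eq_snoc m i
  rcases Int.units_eq_one_or ε with rfl | rfl <;> simp [hy, hB y a x]

theorem apply_eq_zero_of_mem_centralizer {I : Submodule ℂ G} {m : Fin (n + 2) → G}
    {i j : Fin (n + 2)} (hij : i ≠ j) (hi : m i ∈ centralizer br I) (hj : m j ∈ I) :
    br m = 0 := by
  obtain ⟨σ, hσ0, hσ1⟩ := Fin.exists_perm_apply_zero_apply_one hij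
  have hmσ : m ∘ σ = Fin.cons (m i) (Fin.cons (m j) fun l => m (σ l.succ.succ)) := by
    funext l
    refine Fin.cases ?_ (Fin.cases ?_ fun l => ?_) l <;> simp [hσ0, hσ1]
  have h0 : br (m ∘ σ) = 0 := by rw [hmσ]; exact hi _ hj _
  rwa [br.map_perm, smul_eq_zero_iff_eq] at h0

theorem isIdeal_iff_le_comap {I : Submodule ℂ G} :
    IsIdeal br I ↔ ∀ y : Fin (n + 1) → G,
      I ≤ I.comap (br.toMultilinearMap.toLinearMap (Fin.snoc y 0) (Fin.last _)) := by
  simp only [IsIdeal, SetLike.le_def, Submodule.mem_comap, MultilinearMap.toLinearMap_apply,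
    Fin.update_snoc_last, AlternatingMap.coe_multilinearMap]

theorem isIdeal_top : IsIdeal br ⊤ :=
  fun _ _ _ => Submodule.mem_top

theorem IsIdeal.sup {I J : Submodule ℂ G} (hI : IsIdeal br I) (hJ : IsIdeal br J) :
    IsIdeal br (I ⊔ J) := by
  rw [isIdeal_iff_le_comap] at *
  exact fun y => sup_le ((hI y).trans (Submodule.comap_mono le_sup_left))
    ((hJ y).trans (Submodule.comap_mono le_sup_right))

theorem mem_bracketSpan {W : Fin (n + 2) → Submodule ℂ G} {w : Fin (n + 2) → G}
    (hw : ∀ i, w i ∈ W i) : br w ∈ bracketSpan br W :=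
  Submodule.subset_span ⟨w, hw, rfl⟩

theorem bracketSpan_mono {W W' : Fin (n + 2) → Submodule ℂ G} (h : ∀ i, W i ≤ W' i) :
    bracketSpan br W ≤ bracketSpan br W' :=
  Submodule.span_mono fun _ ⟨w, hw, hz⟩ => ⟨w, fun i => h i (hw i), hz⟩

theorem bracketSpan_le_of_isIdeal {W : Fin (n + 2) → Submodule ℂ G} {I : Submodule ℂ G}
    (hI : IsIdeal br I) {i : Fin (n + 2)} (hi : W i ≤ I) : bracketSpan br W ≤ I :=
  Submodule.span_le.2 fun _ ⟨w, hw, hz⟩ => hz ▸ hI.apply_mem w (hi (hw i))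

theorem isIdeal_bracketSpan (hLie : IsNLie br) {W : Fin (n + 2) → Submodule ℂ G}
    (hW : ∀ i, IsIdeal br (W i)) : IsIdeal br (bracketSpan br W) := by
  refine isIdeal_iff_le_comap.2 fun y => Submodule.span_le.2 ?_
  rintro _ ⟨w, hw, rfl⟩
  have hJac : br (Fin.snoc y (br w)) = ∑ i, br (Function.update w i (nAd br y (w i))) := hLie w y
  simp only [SetLike.mem_coe, Submodule.mem_comap, MultilinearMap.toLinearMap_apply,
    Fin.update_snoc_last, AlternatingMap.coe_multilinearMap, hJac]
  refine Submodule.sum_mem _ fun i _ => mem_bracketSpan fun j => ?_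
  rcases eq_or_ne j i with rfl | hji
  · simpa [nAd] using hW j y _ (hw j)
  · simpa [hji] using hw j

theorem bracketSpan_sup_le {I O : Submodule ℂ G} (hO : IsIdeal br O) :
    bracketSpan br (fun _ => I ⊔ O) ≤ derivedStep br I ⊔ O := by
  refine Submodule.span_le.2 ?_
  rintro _ ⟨w, hw, rfl⟩
  choose a ha b hb hab using fun i => Submodule.mem_sup.1 (hw i)
  rw [show w = a + b from funext fun i => (hab i).symm]
  have hexp := br.toMultilinearMap.map_add_univ a b
  simp only [AlternatingMap.coe_multilinearMap] at hexp
  rw [SetLike.mem_coe, hexp]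
  refine Submodule.sum_mem _ fun s _ => ?_
  by_cases hs : s = Finset.univ
  · subst hs
    simpa [derivedStep] using Submodule.mem_sup_left (mem_bracketSpan ha)
  · obtain ⟨j, hj⟩ : ∃ j, j ∉ s := by simpa [Finset.eq_univ_iff_forall] using hs
    exact Submodule.mem_sup_right (hO.apply_mem (i := j) _ (by simpa [hj] using hb j))

theorem derivedStep_sup_eq_top {I O : Submodule ℂ G} (hO : IsIdeal br O)
    (hD : derivedAlg br ⊔ O = ⊤) (hI : I ⊔ O = ⊤) : derivedStep br I ⊔ O = ⊤ := by
  refine top_unique (hD ▸ sup_le ?_ le_sup_right)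
  calc derivedAlg br = bracketSpan br fun _ => I ⊔ O := by rw [hI]; rfl
    _ ≤ derivedStep br I ⊔ O := bracketSpan_sup_le hO

theorem NLieSolvable.eq_top_of_sup_eq_top {R O : Submodule ℂ G} (hR : NLieSolvable br R)
    (hO : IsIdeal br O) (hD : derivedAlg br ⊔ O = ⊤) (hRO : R ⊔ O = ⊤) : O = ⊤ := by
  obtain ⟨k, hk⟩ := hR
  have hiter : ∀ j, (derivedStep br)^[j] R ⊔ O = ⊤ := fun j => by
    induction j with
    | zero => exact hRO
    | succ j ih => rw [Function.iterate_succ_apply']; exact derivedStep_sup_eq_top hO hD ih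
  simpa [hk] using hiter k

section Metric

variable {B : LinearMap.BilinForm ℂ G}

theorem IsMetric.isRefl (hB : IsMetric br B) : B.IsRefl :=
  fun x y h => by rwa [hB.2.1]

theorem IsIdeal.orthogonal (hB : B.IsRefl) (hinv : IsInvariantForm br B) {I : Submodule ℂ G}
    (hI : IsIdeal br I) : IsIdeal br (B.orthogonal I) := by
  intro y x hx v hv
  refine hB _ _ ?_
  rw [hinv y x v, hx _ (hI y v hv), neg_zero]

theorem IsMinimalIdeal.eq_orthogonal_or_eq_top [FiniteDimensional ℂ G] (hB : IsMetric br B)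
    {H J : Submodule ℂ G} (hH : IsMinimalIdeal br H) (hJ : IsIdeal br J)
    (hle : B.orthogonal H ≤ J) : J = B.orthogonal H ∨ J = ⊤ := by
  have hperp := LinearMap.BilinForm.orthogonal_orthogonal hB.1 hB.isRefl
  have hJH : B.orthogonal J ≤ H := hperp H ▸ LinearMap.BilinForm.orthogonal_le hle
  rcases hH.2.2 _ (hJ.orthogonal hB.isRefl hB.2.2) hJH with h | h
  · right; rw [← hperp J, h, LinearMap.BilinForm.orthogonal_bot]
  · left; rw [← hperp J, h]

theorem pairBracket_eq_bot_of_le_orthogonal (hB : IsMetric br B) {H R : Submodule ℂ G}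
    (h : pairBracket br ⊤ R ≤ B.orthogonal H) : pairBracket br H R = ⊥ := by
  refine Submodule.span_eq_bot.2 ?_
  rintro _ ⟨w, hw, rfl⟩
  refine hB.1.1 _ fun x => ?_
  have hx : br (Function.update w 0 x) ∈ pairBracket br ⊤ R :=
    mem_bracketSpan (Fin.cases Submodule.mem_top fun j => by simpa using hw j.succ)
  rw [← Function.update_eq_self 0 w, hB.2.2.apply_update, hB.2.1, h hx _ (hw 0), neg_zero]

end Metric

theorem le_centralizer_of_pairBracket_eq_bot {H R : Submodule ℂ G}
    (h : pairBracket br H R = ⊥) : H ≤ centralizer br R := fun x hx v hv y => by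
  have hmem : br (Fin.cons x (Fin.cons v y)) ∈ pairBracket br H R :=
    mem_bracketSpan (Fin.cases hx (Fin.cases hv fun _ => Submodule.mem_top))
  simpa [h] using hmem

theorem IsMinimalIdeal.le_centralizer [FiniteDimensional ℂ G] (hLie : IsNLie br)
    {B : LinearMap.BilinForm ℂ G} (hB : IsMetric br B) {R H : Submodule ℂ G}
    (hR : IsIdeal br R) (hRsolv : NLieSolvable br R) (hH : IsMinimalIdeal br H) :
    H ≤ centralizer br R := by
  have hP : IsIdeal br (pairBracket br H R) :=
    isIdeal_bracketSpan hLie (Fin.cases hH.1 (Fin.cases hR fun _ => isIdeal_top))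
  refine (hH.2.2 _ hP (bracketSpan_le_of_isIdeal hH.1 (i := 0) le_rfl)).elim
    le_centralizer_of_pairBracket_eq_bot fun hself => ?_
  exfalso
  set O := B.orthogonal H
  have hO : IsIdeal br O := hH.1.orthogonal hB.isRefl hB.2.2
  have hT : ¬ pairBracket br ⊤ R ≤ O := fun h =>
    hH.2.1 (hself ▸ pairBracket_eq_bot_of_le_orthogonal hB h)
  have hRO : R ⊔ O = ⊤ := (hH.eq_orthogonal_or_eq_top hB (hR.sup hO) le_sup_right).resolve_left
    fun h => hT <| (bracketSpan_le_of_isIdeal hR (i := Fin.succ 0) le_rfl).trans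
      (le_sup_left.trans h.le)
  have hD : IsIdeal br (derivedAlg br) := isIdeal_bracketSpan hLie fun _ => isIdeal_top
  have hDO : derivedAlg br ⊔ O = ⊤ :=
    (hH.eq_orthogonal_or_eq_top hB (hD.sup hO) le_sup_right).resolve_left
      fun h => hT ((bracketSpan_mono fun _ => le_top).trans (le_sup_left.trans h.le))
  exact LinearMap.BilinForm.orthogonal_ne_top hB.1 hB.isRefl hH.2.1
    (hRsolv.eq_top_of_sup_eq_top hO hDO hRO)

theorem IsSModule.isIdeal {S R K : Submodule ℂ G} (hK : IsSModule br S K)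
    (hKR : K ≤ centralizer br R) (hSR : S ⊔ R = ⊤) : IsIdeal br K := by
  intro y x hx
  choose a ha b hb hab using fun i => Submodule.mem_sup.1 (hSR ▸ Submodule.mem_top : y i ∈ S ⊔ R)
  have hexp : br (Fin.snoc (a + b) x) =
      ∑ s : Finset (Fin (n + 1)), br (Fin.snoc (s.piecewise a b) x) := by
    simpa using congrArg (· x) (br.toMultilinearMap.curryRight.map_add_univ a b)
  rw [show y = a + b from funext fun i => (hab i).symm, hexp]
  refine Submodule.sum_mem _ fun s _ => ?_
  by_cases hs : s = Finset.univ
  · subst hs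
    simpa using hK a ha x hx
  · obtain ⟨j, hj⟩ : ∃ j, j ∉ s := by simpa [Finset.eq_univ_iff_forall] using hs
    rw [apply_eq_zero_of_mem_centralizer (Fin.castSucc_lt_last j).ne' (by simpa using hKR hx)
      (by simpa [hj] using hb j)]
    exact K.zero_mem

theorem IsMinimalIdeal.isIrreducibleSModule {S R H : Submodule ℂ G} (hH : IsMinimalIdeal br H)
    (hHR : H ≤ centralizer br R) (hSR : S ⊔ R = ⊤) : IsIrreducibleSModule br S H :=
  ⟨fun y _ => hH.1 y, hH.2.1, fun K hKH hK => hH.2.2 K (hK.isIdeal (hKH.trans hHR) hSR) hKH⟩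

theorem IsIrreducibleSModule.isMinimalIdeal {S R H : Submodule ℂ G}
    (hH : IsIrreducibleSModule br S H) (hHR : H ≤ centralizer br R) (hSR : S ⊔ R = ⊤) :
    IsMinimalIdeal br H :=
  ⟨hH.1.isIdeal hHR hSR, hH.2.1, fun I hI hIH => hH.2.2 I hIH fun y _ => hI y⟩

end

variable {n : ℕ} {G : Type*} [AddCommGroup G] [Module ℂ G]

theorem minimal_ideal_iff_irreducible_submodule_of_centralizer_general
    (br : AlternatingMap ℂ G G (Fin (n + 2))) (hLie : IsNLie br)
    [FiniteDimensional ℂ G]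
    (B : LinearMap.BilinForm ℂ G) (hB : IsMetric br B)
    (S R : Submodule ℂ G) (hLevi : IsLeviDecomp br S R)
    (H : Submodule ℂ G) :
    IsMinimalIdeal br H ↔
      (H ≤ centralizer br R ∧ IsIrreducibleSModule br S H) := by
  obtain ⟨⟨hR, hRsolv, -⟩, -, -, hSR⟩ := hLevi
  have hsup : S ⊔ R = ⊤ := hSR.sup_eq_top
  refine ⟨fun hH => ?_, fun ⟨hHR, hH⟩ => hH.isMinimalIdeal hHR hsup⟩
  have hHR := hH.le_centralizer hLie hB hR hRsolv
  exact ⟨hHR, hH.isIrreducibleSModule hHR hsup⟩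

theorem minimal_ideal_iff_irreducible_submodule_of_centralizer
    (br : AlternatingMap ℂ G G (Fin (n + 2))) (hLie : IsNLie br)
    [FiniteDimensional ℂ G]
    (B : LinearMap.BilinForm ℂ G) (hB : IsMetric br B)
    (S R : Submodule ℂ G) (hLevi : IsLeviDecomp br S R)
    (hss : ∀ I : Submodule ℂ G, IsIdeal br I → IsStrongSemisimple br I → I = ⊥)
    (H : Submodule ℂ G) (hH : IsSubalgebra br H) :
    IsMinimalIdeal br H ↔
      (H ≤ centralizer br R ∧ IsIrreducibleSModule br S H) :=
  minimal_ideal_iff_irreducible_submodule_of_centralizer_general br hLie B hB S R hLevi H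
end

section
/- Let (G, B) be a metric n-Lie algebra. Then the center satisfies C(G) ⊆ C(G)^⊥ if and only if G has no one-dimensional nondegenerate ideals. -/
open scoped BigOperators

variable {n : ℕ} {G : Type*} [AddCommGroup G] [Module ℂ G]

omit [AddCommGroup G] [Module ℂ G] in
lemma snoc_eq_cons_comp (m : Fin (n + 1) → G) (x : G) :
    Fin.snoc m x = (Fin.cons x m) ∘ finRotate (n + 2) := by
  funext j
  refine Fin.lastCases ?_ ?_ j
  · simp [finRotate_last]
  · intro i
    simp [finRotate_succ_apply, Fin.coeSucc_eq_succ]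

lemma unit_smul_eq_zero {M : Type*} [AddCommGroup M] {ε : ℤˣ} {u : M}
    (h : ε • u = 0) : u = 0 := by
  rcases Int.units_eq_one_or ε with hε | hε <;> subst hε <;> simpa using h

lemma mem_center_iff (br : AlternatingMap ℂ G G (Fin (n + 2))) (x : G) :
    x ∈ center br ↔ ∀ y : Fin (n + 1) → G, br (Fin.snoc y x) = 0 := by
  constructor
  · intro hx y
    rw [snoc_eq_cons_comp, AlternatingMap.map_perm]
    have := hx (y 0) (by trivial) (Fin.tail y)
    rw [Fin.cons_self_tail] at this
    rw [this, smul_zero]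
  · intro h v _ y
    refine unit_smul_eq_zero (ε := Equiv.Perm.sign (finRotate (n + 2))) ?_
    rw [← AlternatingMap.map_perm, ← snoc_eq_cons_comp]
    exact h _

theorem center_isotropic_iff_no_one_dim_nondeg_ideal
    (br : AlternatingMap ℂ G G (Fin (n + 2))) (hLie : IsNLie br)
    [FiniteDimensional ℂ G]
    (B : LinearMap.BilinForm ℂ G) (hB : IsMetric br B) :
    center br ≤ B.orthogonal (center br) ↔
      ∀ I : Submodule ℂ G, IsIdeal br I → Module.finrank ℂ I = 1 →
        ¬ NondegOn B I := by
  obtain ⟨hnd, hsym, hinv⟩ := hB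
  have key : ∀ (y : Fin (n + 1) → G) (z : G), B (br (Fin.snoc y z)) z = 0 := by
    intro y z
    have h := hinv y z z
    have : B (br (Fin.snoc y z)) z + B (br (Fin.snoc y z)) z = 0 := by
      nth_rewrite 1 [h]; ring
    exact add_self_eq_zero.mp this
  constructor
  · intro hiso I hI hfin hndI
    -- get a nonzero element z of I
    have hIne : I ≠ ⊥ := by
      intro h
      rw [h] at hfin
      simp at hfin
    obtain ⟨z, hzI, hz0⟩ := Submodule.exists_mem_ne_zero_of_ne_bot hIne
    have hspan : Submodule.span ℂ {z} = I := by
      apply Submodule.eq_of_le_of_finrank_le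
      · exact (Submodule.span_singleton_le_iff_mem z I).mpr hzI
      · rw [hfin, finrank_span_singleton hz0]
    -- B z z ≠ 0
    have hBzz : B z z ≠ 0 := by
      intro h0
      apply hz0
      apply hndI z hzI
      intro w hwI
      rw [← hspan] at hwI
      obtain ⟨c, rfl⟩ := Submodule.mem_span_singleton.mp hwI
      simp [h0]
    -- z ∈ center
    have hzc : z ∈ center br := by
      rw [mem_center_iff]
      intro y
      apply hndI _ (hI y z hzI)
      intro w hwI
      rw [← hspan] at hwI
      obtain ⟨c, rfl⟩ := Submodule.mem_span_singleton.mp hwI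
      simp [key y z]
    exact hBzz (hiso hzc z hzc)
  · intro hno
    by_contra hiso
    rw [SetLike.not_le_iff_exists] at hiso
    obtain ⟨x, hxc, hxo⟩ := hiso
    have : ∃ y ∈ center br, B y x ≠ 0 := by
      by_contra h
      push_neg at h
      exact hxo (LinearMap.BilinForm.mem_orthogonal_iff.mpr h)
    obtain ⟨y, hyc, hBxy⟩ := this
    -- find z in center with B z z ≠ 0
    have : ∃ z ∈ center br, B z z ≠ 0 := by
      by_cases hx : B x x ≠ 0
      · exact ⟨x, hxc, hx⟩
      by_cases hy : B y y ≠ 0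
      · exact ⟨y, hyc, hy⟩
      push_neg at hx hy
      refine ⟨x + y, (center br).add_mem hxc hyc, ?_⟩
      have : B (x + y) (x + y) = 2 * B y x := by
        simp only [map_add, LinearMap.add_apply]
        rw [hx, hy, hsym x y]; ring
      rw [this]
      simp [hBxy]
    obtain ⟨z, hzc, hBzz⟩ := this
    have hz0 : z ≠ 0 := by rintro rfl; simp at hBzz
    refine hno (Submodule.span ℂ {z}) ?_ (finrank_span_singleton hz0) ?_
    · intro yy w hw
      have : br (Fin.snoc yy w) = 0 := by
        obtain ⟨c, rfl⟩ := Submodule.mem_span_singleton.mp hw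
        have hs := br.toMultilinearMap.snoc_smul yy c z
        simp only [AlternatingMap.coe_multilinearMap] at hs
        rw [hs, (mem_center_iff br z).mp hzc yy, smul_zero]
      rw [this]; exact Submodule.zero_mem _
    · intro w hw h
      obtain ⟨c, rfl⟩ := Submodule.mem_span_singleton.mp hw
      have := h z (Submodule.mem_span_singleton_self z)
      simp only [map_smul, LinearMap.smul_apply, smul_eq_mul] at this
      rcases mul_eq_zero.mp this with hc | hc
      · rw [hc, zero_smul]
      · exact absurd hc hBzz
end

section
/- Let (G, B) be a metric n-Lie algebra with dim G > 1. Then dim B(G) ≥ dim C(G) + 1, where B(G) is the span of all nondegenerate invariant symmetric bilinear forms on G and C(G) is the center. -/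
open scoped BigOperators

variable {n : ℕ} {G : Type*} [AddCommGroup G] [Module ℂ G]

/-!
Over an infinite field `B + t • K` is nondegenerate for all but finitely many `t`, so once a
metric `B` exists, every invariant symmetric form lies in `B(G)`. For central `a, b` the
symmetrized product `(x, y) ↦ B(a, x) B(b, y) + B(b, x) B(a, y)` is invariant, because
`B(c, [x₁, …, y]) = -B([x₁, …, c], y) = 0` for central `c`; for fixed `a ≠ 0` it depends
injectively on `b`, so these products span a space `W` with `dim W ≥ dim C(G)`. If `B ∉ W`, then
`B(G) ⊇ W ⊕ ℂ B`. If `B ∈ W`, then `C(G)^⊥ = 0`, so `C(G) = G`, and `W` strictly contains the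
`dim G`-dimensional space of products with a fixed `a`.
-/

namespace Matrix

open Polynomial in
theorem exists_ne_zero_det_add_smul_ne_zero {ι K : Type*} [Fintype ι] [DecidableEq ι] [Field K]
    [Infinite K] {M : Matrix ι ι K} (hM : M.det ≠ 0) (N : Matrix ι ι K) :
    ∃ t ≠ (0 : K), (M + t • N).det ≠ 0 := by
  set p : K[X] := (M.map C + (X : K[X]) • N.map C).det
  have hp : ∀ t, p.eval t = (M + t • N).det := fun t => by
    rw [← coe_evalRingHom, RingHom.map_det]
    congr 1
    ext i j
    simp
    ring
  by_contra! h
  have hp0 : p = 0 := p.eq_zero_of_infinite_isRoot <|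
    (Set.finite_singleton (0 : K)).infinite_compl.mono fun t ht => by
      simpa [hp] using h t ht
  exact hM (by simpa [hp] using congrArg (eval 0) hp0)

end Matrix

namespace LinearMap.BilinForm

open LinearMap (BilinForm)

variable {K V : Type*} [Field K] [AddCommGroup V] [Module K V]

theorem Nondegenerate.exists_ne_zero_nondegenerate_add_smul [Infinite K] [FiniteDimensional K V]
    {B : BilinForm K V} (hB : B.Nondegenerate) (C : BilinForm K V) :
    ∃ t ≠ (0 : K), (B + t • C).Nondegenerate := by
  classical
  let b := Module.finBasis K V
  obtain ⟨t, ht, hdet⟩ := Matrix.exists_ne_zero_det_add_smul_ne_zero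
    ((nondegenerate_iff_det_ne_zero b).mp hB) (BilinForm.toMatrix b C)
  refine ⟨t, ht, (nondegenerate_iff_det_ne_zero b).mpr ?_⟩
  rwa [map_add, map_smul]

theorem eq_top_of_orthogonal_eq_bot [FiniteDimensional K V] {B : BilinForm K V}
    (hB : B.Nondegenerate) {W : Submodule K V} (hW : B.orthogonal W = ⊥) : W = ⊤ := by
  have h := finrank_orthogonal hB W
  rw [hW, finrank_bot] at h
  exact Submodule.eq_top_of_finrank_eq (le_antisymm (Submodule.finrank_le W) (by omega))

def symProd (B : BilinForm K V) : V →ₗ[K] V →ₗ[K] BilinForm K V :=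
  LinearMap.mk₂ K (fun a b => (B a).smulRight (B b) + (B b).smulRight (B a))
    (fun a₁ a₂ b => by ext; simp; ring) (fun c a b => by ext; simp; ring)
    (fun a b₁ b₂ => by ext; simp; ring) (fun c a b => by ext; simp; ring)

@[simp]
theorem symProd_apply (B : BilinForm K V) (a b x y : V) :
    B.symProd a b x y = B a x * B b y + B b x * B a y := by
  simp [symProd]

theorem Nondegenerate.eq_top_of_mem_map₂_symProd [FiniteDimensional K V] {B : BilinForm K V}
    (hB : B.Nondegenerate) {p : Submodule K V} (h : B ∈ Submodule.map₂ B.symProd p p) :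
    p = ⊤ := by
  refine eq_top_of_orthogonal_eq_bot hB <| (Submodule.eq_bot_iff _).mpr fun x hx => ?_
  have hx' : ∀ a ∈ p, B a x = 0 := fun a ha => hx a ha
  have hker : Submodule.map₂ B.symProd p p ≤ LinearMap.ker (LinearMap.applyₗ x) :=
    Submodule.map₂_le.mpr fun a ha b hb => by ext y; simp [hx' a ha, hx' b hb]
  have hBx : B x = 0 := LinearMap.mem_ker.mp (hker h)
  exact hB.1 x fun y => by rw [hBx, LinearMap.zero_apply]

variable [NeZero (2 : K)] {B : BilinForm K V}

theorem Nondegenerate.symProd_injective (hB : B.Nondegenerate) {a : V} (ha : a ≠ 0) :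
    Function.Injective (B.symProd a) := by
  refine (injective_iff_map_eq_zero _).mpr fun b hb => ?_
  have hb' : ∀ x y, B a x * B b y + B b x * B a y = 0 := fun x y => by
    simpa using congrArg (fun C : BilinForm K V => C x y) hb
  obtain ⟨x, hx⟩ : ∃ x, B a x ≠ 0 := by
    by_contra! h
    exact ha (hB.1 a h)
  have hbx : B b x = 0 := by
    have h2 : (2 : K) * (B a x * B b x) = 0 := by linear_combination hb' x x
    simpa [hx, two_ne_zero] using h2
  refine hB.1 b fun y => ?_
  simpa [hbx, hx] using hb' x y

theorem Nondegenerate.finrank_le_finrank_map₂_symProd [FiniteDimensional K V]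
    (hB : B.Nondegenerate) (p : Submodule K V) :
    Module.finrank K p ≤ Module.finrank K (Submodule.map₂ B.symProd p p) := by
  rcases eq_or_ne p ⊥ with rfl | hp
  · simp
  obtain ⟨a, hap, ha⟩ := Submodule.exists_mem_ne_zero_of_ne_bot hp
  calc Module.finrank K p
      = Module.finrank K (p.map (B.symProd a)) :=
        (Submodule.equivMapOfInjective _ (hB.symProd_injective ha) p).finrank_eq
    _ ≤ Module.finrank K (Submodule.map₂ B.symProd p p) := by
        rw [← Submodule.map₂_span_singleton_eq_map]
        exact Submodule.finrank_mono <| Submodule.map₂_le_map₂_left <|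
          (Submodule.span_singleton_le_iff_mem a p).mpr hap

theorem Nondegenerate.finrank_add_one_le_finrank_map₂_symProd_top [FiniteDimensional K V]
    (hB : B.Nondegenerate) (hV : 1 < Module.finrank K V) :
    Module.finrank K V + 1 ≤ Module.finrank K (Submodule.map₂ B.symProd ⊤ ⊤) := by
  have : Nontrivial V := Module.nontrivial_of_finrank_pos (R := K) (by omega)
  obtain ⟨a, ha⟩ := exists_ne (0 : V)
  obtain ⟨x, hxa, hx⟩ := Submodule.exists_mem_ne_zero_of_ne_bot <|
    LinearMap.ker_ne_bot_of_finrank_lt (f := B a) (by simpa using hV)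
  obtain ⟨c, hc⟩ : ∃ c, B c x ≠ 0 := by
    by_contra! h
    exact hx (hB.2 x h)
  -- forms in the range of `B.symProd a` vanish at `(x, x)`, but `B.symProd c c` does not
  have hc_notMem : B.symProd c c ∉ LinearMap.range (B.symProd a) := by
    rintro ⟨b, hb⟩
    have hxx := congrArg (fun C : BilinForm K V => C x x) hb
    simp only [symProd_apply, LinearMap.mem_ker.mp hxa, zero_mul] at hxx
    have h2 : (2 : K) * (B c x * B c x) = 0 := by linear_combination -hxx
    simp [hc, two_ne_zero] at h2
  have hlt : LinearMap.range (B.symProd a) < Submodule.map₂ B.symProd ⊤ ⊤ := by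
    refine SetLike.lt_iff_le_and_exists.mpr ⟨?_, _, Submodule.apply_mem_map₂ _ trivial trivial,
      hc_notMem⟩
    rw [LinearMap.range_eq_map, ← Submodule.map₂_span_singleton_eq_map]
    exact Submodule.map₂_le_map₂_left le_top
  calc Module.finrank K V + 1 = Module.finrank K (LinearMap.range (B.symProd a)) + 1 := by
        rw [LinearMap.finrank_range_of_inj (hB.symProd_injective ha)]
    _ ≤ Module.finrank K (Submodule.map₂ B.symProd ⊤ ⊤) :=
        Submodule.finrank_lt_finrank_of_lt (K := K) (V := BilinForm K V) hlt

end LinearMap.BilinForm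

section NLie

open LinearMap (BilinForm)

variable (br : AlternatingMap ℂ G G (Fin (n + 2)))

theorem apply_eq_zero_of_mem_center {a : G} (ha : a ∈ center br) {u : Fin (n + 2) → G}
    {j : Fin (n + 2)} (hu : u j = a) : br u = 0 := by
  have of_head : ∀ v : Fin (n + 2) → G, v 0 = a → br v = 0 := fun v hv => by
    rw [← Fin.cons_self_tail v, ← Fin.cons_self_tail (Fin.tail v), hv]
    exact ha _ trivial _
  by_cases hj : j = 0
  · exact of_head u (hj ▸ hu)
  · rw [← neg_eq_zero, ← br.map_swap u (Ne.symm hj)]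
    exact of_head _ (by simp [hu])

variable {br}

theorem apply_bracket_eq_zero_of_mem_center {B : BilinForm ℂ G} (hB : B ∈ invSymForms br)
    {c : G} (hc : c ∈ center br) (x : Fin (n + 1) → G) (y : G) :
    B c (br (Fin.snoc x y)) = 0 := by
  rw [hB.1, hB.2 x y c, apply_eq_zero_of_mem_center br hc (Fin.snoc_last (α := fun _ => G) c x)]
  simp

theorem map₂_symProd_center_le_invSymForms {B : BilinForm ℂ G} (hB : B ∈ invSymForms br) :
    Submodule.map₂ B.symProd (center br) (center br) ≤ invSymForms br := by
  refine Submodule.map₂_le.mpr fun a ha b hb => ⟨fun x y => by simp; ring, fun x y₁ y₂ => ?_⟩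
  simp [apply_bracket_eq_zero_of_mem_center hB ha, apply_bracket_eq_zero_of_mem_center hB hb]

theorem invSymForms_le_metricSpan [FiniteDimensional ℂ G] {B : BilinForm ℂ G}
    (hB : IsMetric br B) : invSymForms br ≤ metricSpan br := by
  intro K hK
  obtain ⟨t, ht, hnd⟩ := hB.1.exists_ne_zero_nondegenerate_add_smul K
  have hBK : B + t • K ∈ invSymForms br :=
    (invSymForms br).add_mem hB.2 ((invSymForms br).smul_mem t hK)
  have hK_eq : K = t⁻¹ • ((B + t • K) - B) := by
    rw [add_sub_cancel_left, smul_smul, inv_mul_cancel₀ ht, one_smul]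
  rw [hK_eq]
  exact Submodule.smul_mem _ _ <| Submodule.sub_mem _
    (Submodule.subset_span ⟨hnd, hBK⟩) (Submodule.subset_span hB)

end NLie

theorem metric_dimension_ge_center_dim_add_one_general
    (br : AlternatingMap ℂ G G (Fin (n + 2)))
    [FiniteDimensional ℂ G]
    (B : LinearMap.BilinForm ℂ G) (hB : IsMetric br B)
    (hdim : 1 < Module.finrank ℂ G) :
    Module.finrank ℂ (metricSpan br) ≥ Module.finrank ℂ (center br) + 1 := by
  set W := Submodule.map₂ B.symProd (center br) (center br)
  have hW : W ≤ metricSpan br :=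
    (map₂_symProd_center_le_invSymForms hB.2).trans (invSymForms_le_metricSpan hB)
  by_cases hBW : B ∈ W
  · have hC : center br = ⊤ := hB.1.eq_top_of_mem_map₂_symProd hBW
    calc Module.finrank ℂ (center br) + 1 = Module.finrank ℂ G + 1 := by rw [hC, finrank_top]
      _ ≤ Module.finrank ℂ W := by
        have h := hB.1.finrank_add_one_le_finrank_map₂_symProd_top hdim
        rwa [← hC] at h
      _ ≤ Module.finrank ℂ (metricSpan br) := Submodule.finrank_mono hW
  · have hBspan : Submodule.span ℂ {B} ≤ metricSpan br :=
      (Submodule.span_singleton_le_iff_mem _ _).mpr (Submodule.subset_span hB)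
    calc Module.finrank ℂ (center br) + 1 ≤ Module.finrank ℂ W + 1 :=
          Nat.succ_le_succ (hB.1.finrank_le_finrank_map₂_symProd _)
      _ ≤ Module.finrank ℂ (W ⊔ Submodule.span ℂ {B} : Submodule ℂ _) :=
          Submodule.finrank_lt_finrank_of_lt (K := ℂ) (Submodule.lt_sup_iff_notMem.mpr hBW)
      _ ≤ Module.finrank ℂ (metricSpan br) := Submodule.finrank_mono (sup_le hW hBspan)

theorem metric_dimension_ge_center_dim_add_one
    (br : AlternatingMap ℂ G G (Fin (n + 2))) (hLie : IsNLie br)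
    [FiniteDimensional ℂ G]
    (B : LinearMap.BilinForm ℂ G) (hB : IsMetric br B)
    (hdim : 1 < Module.finrank ℂ G) :
    Module.finrank ℂ (metricSpan br) ≥ Module.finrank ℂ (center br) + 1 :=
  metric_dimension_ge_center_dim_add_one_general br B hB hdim
end

section
/- Let G be an n-Lie algebra with G = ⊕_{k=1}^m J_k a direct sum (of vector spaces) of ideals J_k. If J is an ideal satisfying [J,G,...,G] = J, or satisfying that the quotient algebra G/J has trivial center, then J = ⊕_{k=1}^m (J_k ∩ J). -/
open scoped BigOperators

variable {n : ℕ} {G : Type*} [AddCommGroup G] [Module ℂ G]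

/-- If `I` is an ideal and some coordinate of `x` lies in `I`, then `br x ∈ I`. -/
lemma mem_of_slot (br : AlternatingMap ℂ G G (Fin (n + 2))) {I : Submodule ℂ G}
    (hI : IsIdeal br I) (x : Fin (n + 2) → G) (i : Fin (n + 2)) (hx : x i ∈ I) :
    br x ∈ I := by
  by_cases h : i = Fin.last (n + 1)
  · subst h
    have := hI (Fin.init x) (x (Fin.last (n + 1))) hx
    rwa [Fin.snoc_init_self] at this
  · set x' := x ∘ Equiv.swap i (Fin.last (n + 1)) with hx'
    have hlast : x' (Fin.last (n + 1)) = x i := by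
      simp [hx', Equiv.swap_apply_right]
    have hmem : br x' ∈ I := by
      have := hI (Fin.init x') (x' (Fin.last (n + 1))) (hlast ▸ hx)
      rwa [Fin.snoc_init_self] at this
    have hswap : br x' = -br x := br.map_swap x h
    have : br x = -br x' := by rw [hswap, neg_neg]
    rw [this]
    exact neg_mem hmem

/-- Brackets with entries in two independent ideals vanish. -/
lemma bracket_two_ideals_eq_zero (br : AlternatingMap ℂ G G (Fin (n + 2)))
    {m : ℕ} {Jk : Fin m → Submodule ℂ G} (hJk : ∀ k, IsIdeal br (Jk k))
    (hindep : iSupIndep Jk) {i j : Fin m} (hij : i ≠ j)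
    (x : Fin (n + 2) → G) (a b : Fin (n + 2))
    (hxa : x a ∈ Jk i) (hxb : x b ∈ Jk j) : br x = 0 := by
  have h1 : br x ∈ Jk i := mem_of_slot br (hJk i) x a hxa
  have h2 : br x ∈ Jk j := mem_of_slot br (hJk j) x b hxb
  exact (hindep.pairwiseDisjoint hij).le_bot ⟨h1, h2⟩

theorem ideal_decomposes_along_direct_sum
    (br : AlternatingMap ℂ G G (Fin (n + 2))) (hLie : IsNLie br)
    (m : ℕ) (Jk : Fin m → Submodule ℂ G)
    (hJk : ∀ k, IsIdeal br (Jk k))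
    (hindep : iSupIndep Jk) (hsup : (⨆ k, Jk k) = ⊤)
    (J : Submodule ℂ G) (hJ : IsIdeal br J)
    (hcond : idealBracket br J = J ∨
      ∀ x : G, (∀ y : Fin (n + 1) → G, br (Fin.snoc y x) ∈ J) → x ∈ J) :
    J = ⨆ k, (Jk k ⊓ J) := by
  classical
  -- decomposition of any element of G along the ideals Jk
  have hdecomp : ∀ x : G, ∃ u : Fin m → G, (∀ k, u k ∈ Jk k) ∧ x = ∑ k, u k := by
    intro x
    have hx : x ∈ ⨆ k, Jk k := by rw [hsup]; trivial
    obtain ⟨f, hf, hfs⟩ := (Submodule.mem_iSup_iff_exists_finsupp Jk x).mp hx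
    refine ⟨fun k => f k, hf, ?_⟩
    rw [← hfs, Finsupp.sum_fintype]
    intro i; rfl
  refine le_antisymm ?_ (iSup_le fun k => inf_le_right)
  rcases hcond with hcond | hcond
  · -- Case [J, G, …, G] = J
    conv_lhs => rw [← hcond]
    rw [idealBracket, bracketSpan, Submodule.span_le]
    rintro z ⟨w, hw, rfl⟩
    have hw0 : w 0 ∈ J := by simpa using hw 0
    obtain ⟨u, hu, huw⟩ := hdecomp (w 1)
    have hwe : br w = ∑ k, br (Function.update w 1 (u k)) := by
      conv_lhs => rw [← Function.update_eq_self 1 w, huw]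
      exact br.map_update_sum Finset.univ 1 u w
    rw [hwe]
    refine Submodule.sum_mem _ fun k _ => ?_
    refine Submodule.mem_iSup_of_mem k ⟨?_, ?_⟩
    · exact mem_of_slot br (hJk k) _ 1 (by simp [hu k])
    · refine mem_of_slot br hJ _ 0 ?_
      rw [Function.update_of_ne (show (0:Fin (n+2)) ≠ 1 by simp [Fin.ext_iff]) _ w]
      exact hw0
  · -- Case: the center of G/J is trivial
    intro x hxJ
    obtain ⟨u, hu, hxu⟩ := hdecomp x
    have hukJ : ∀ k, u k ∈ J := by
      intro k
      refine hcond (u k) fun y => ?_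
      obtain ⟨v, hv, hyv⟩ := hdecomp (y 0)
      set t : Fin (n + 2) → G := Fin.snoc y (u k) with ht
      have ht0 : t 0 = y 0 := by
        have : (0 : Fin (n + 2)) = Fin.castSucc 0 := rfl
        rw [ht, this, Fin.snoc_castSucc]
      have hte : br t = ∑ j, br (Function.update t 0 (v j)) := by
        conv_lhs => rw [← Function.update_eq_self 0 t]
        rw [ht0, hyv]
        exact br.map_update_sum Finset.univ 0 v t
      have h0last : (0 : Fin (n + 2)) ≠ Fin.last (n + 1) := by
        simp [Fin.ext_iff]
      have htlast : ∀ a : G, Function.update t 0 a (Fin.last (n + 1)) = u k := by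
        intro a
        rw [Function.update_of_ne (Ne.symm h0last)]
        simp [ht]
      have hzero : ∀ j, j ≠ k → br (Function.update t 0 (v j)) = 0 := by
        intro j hjk
        exact bracket_two_ideals_eq_zero br hJk hindep hjk _ 0 (Fin.last (n + 1))
          (by simp [hv j]) (by rw [htlast]; exact hu k)
      have hsum : br t = br (Function.update t 0 (v k)) := by
        rw [hte]
        exact Finset.sum_eq_single k (fun j _ hj => hzero j hj)
          (fun h => absurd (Finset.mem_univ k) h)
      -- now compare with the tuple having x in the last slot
      set c : Fin (n + 2) → G := Function.update (Fin.snoc y x) 0 (v k) with hc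
      have hcJ : br c ∈ J := by
        have : c = Fin.snoc (Function.update y 0 (v k)) x := by
          rw [hc, Fin.snoc_update]; rfl
        rw [this]
        exact hJ _ x hxJ
      have hclast : c (Fin.last (n + 1)) = x := by
        rw [hc, Function.update_of_ne (Ne.symm h0last), Fin.snoc_last]
      have hce : br c = ∑ l, br (Function.update c (Fin.last (n + 1)) (u l)) := by
        conv_lhs => rw [← Function.update_eq_self (Fin.last (n + 1)) c]
        rw [hclast, hxu]
        exact br.map_update_sum Finset.univ _ u c
      have hczero : ∀ l, l ≠ k →
          br (Function.update c (Fin.last (n + 1)) (u l)) = 0 := by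
        intro l hlk
        refine bracket_two_ideals_eq_zero br hJk hindep hlk _ (Fin.last (n + 1)) 0
          (by simp [hu l]) ?_
        rw [Function.update_of_ne h0last, hc, Function.update_self]
        exact hv k
      have hcsum : br c = br (Function.update c (Fin.last (n + 1)) (u k)) := by
        rw [hce]
        exact Finset.sum_eq_single k (fun l _ hl => hczero l hl)
          (fun h => absurd (Finset.mem_univ k) h)
      have hkey : Function.update c (Fin.last (n + 1)) (u k) =
          Function.update t 0 (v k) := by
        rw [hc, ht, Function.update_comm h0last, Fin.update_snoc_last]
      rw [hsum, ← hkey, ← hcsum]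
      exact hcJ
    rw [hxu]
    exact Submodule.sum_mem _ fun k _ =>
      Submodule.mem_iSup_of_mem k ⟨hu k, hukJ k⟩
end
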